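/- With R the 9×9 block R-matrix of A_{r,s} and T = diag-block matrix with entries T^0_0 = f, T^1_1 = a, T^1_2 = b, T^2_1 = c, T^2_2 = d (all other entries 0), the relation R T_1 T_2 = T_2 T_1 R holds in M_9(A_{r,s}) if and only if the generators satisfy the defining relations ab = r^{-1}ba, bd = r^{-1}db, ac = r^{-1}ca, cd = r^{-1}dc, bc = cb, ad - da = (r^{-1}-r)bc, af = fa, cf = sfc, bf = s^{-1}fb, df = fd. -/

import Mathlib

noncomputable section

/-- The diagonal entries of the 9×9 R-matrix of `A_{r,s}`: the matrix acts
diagonally on `e_i ⊗ e_j` with eigenvalue `dEnt i j`, except for the extra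
`λ = r - r⁻¹` entries. -/
def dEnt (r s : ℂ) : Matrix (Fin 3) (Fin 3) ℂ := ![![r, s⁻¹, 1], ![s, r, 1], ![1, 1, r]]

/-- The 9×9 block R-matrix of `A_{r,s}` on `ℂ³ ⊗ ℂ³` (basis indexed by pairs),
built from the blocks `r`, `S⁻¹ = diag(s⁻¹,1)`, `S = diag(s,1)`, `Λ = λ·Id₂` and the
standard `GL_r(2)` R-matrix `R_r`:
`R(e_0⊗e_0) = r e_0⊗e_0`, `R(e_0⊗e_1) = s⁻¹ e_0⊗e_1`, `R(e_0⊗e_2) = e_0⊗e_2`,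
`R(e_1⊗e_0) = λ e_0⊗e_1 + s e_1⊗e_0`, `R(e_2⊗e_0) = λ e_0⊗e_2 + e_2⊗e_0`, and the
`R_r`-action on the span of `e_i⊗e_j`, `i,j ∈ {1,2}`. -/
def Rmat (r s : ℂ) : Matrix (Fin 3 × Fin 3) (Fin 3 × Fin 3) ℂ := fun p q =>
  (if p = q then dEnt r s p.1 p.2 else 0) +
  (if ((p.1 = 0 ∧ q.2 = 0 ∧ p.2 = q.1 ∧ q.1 ≠ 0) ∨ (p = (1, 2) ∧ q = (2, 1)))
    then (r - r⁻¹) else 0)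

lemma algmul {A : Type*} [Ring A] [Algebra ℂ A] (c : ℂ) (x : A) :
    algebraMap ℂ A c * x = c • x := (Algebra.smul_def _ _).symm

lemma mulalg {A : Type*} [Ring A] [Algebra ℂ A] (c : ℂ) (x : A) :
    x * algebraMap ℂ A c = c • x := by rw [← Algebra.commutes, ← Algebra.smul_def]

lemma mulapp_fun {m n o α : Type*} [Fintype n] [Mul α] [AddCommMonoid α] (M : m → n → α)
    (N : n → o → α) (i : m) (k : o) :
    (HMul.hMul (α := Matrix m n α) (β := Matrix n o α) (γ := Matrix m o α) M N) i k =
      ∑ j, M i j * N j k := rfl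

lemma mulapp_fun' {m n o α : Type*} [Fintype n] [Mul α] [AddCommMonoid α] (M : Matrix m n α)
    (N : n → o → α) (i : m) (k : o) :
    (HMul.hMul (α := Matrix m n α) (β := Matrix n o α) (γ := Matrix m o α) M N) i k =
      ∑ j, M i j * N j k := rfl

lemma fin3_mk0 (h : 0 < 3) : (⟨0, h⟩ : Fin 3) = 0 := rfl
lemma fin3_mk1 (h : 1 < 3) : (⟨1, h⟩ : Fin 3) = 1 := rfl
lemma fin3_mk2 (h : 2 < 3) : (⟨2, h⟩ : Fin 3) = 2 := rfl

set_option maxHeartbeats 1000000 in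
/-- With `R` the 9×9 block R-matrix of `A_{r,s}` and `T` the block-diagonal matrix of
generators (`T⁰₀ = f`, `T¹₁ = a`, `T¹₂ = b`, `T²₁ = c`, `T²₂ = d`), the RTT relation
`R T₁ T₂ = T₂ T₁ R` holds (entrywise, in any ℂ-algebra containing the elements)
if and only if the generators satisfy the defining relations of `A_{r,s}`. -/
theorem stmt7 {A : Type*} [Ring A] [Algebra ℂ A] (r s : ℂ) (hr : r ≠ 0) (hs : s ≠ 0)
    (a b c d f : A) :
    (let T : Matrix (Fin 3) (Fin 3) A := ![![f, 0, 0], ![0, a, b], ![0, c, d]]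
     let T1 : Matrix (Fin 3 × Fin 3) (Fin 3 × Fin 3) A :=
       fun p q => if p.2 = q.2 then T p.1 q.1 else 0
     let T2 : Matrix (Fin 3 × Fin 3) (Fin 3 × Fin 3) A :=
       fun p q => if p.1 = q.1 then T p.2 q.2 else 0
     let RA : Matrix (Fin 3 × Fin 3) (Fin 3 × Fin 3) A :=
       (Rmat r s).map (algebraMap ℂ A)
     RA * T1 * T2 = T2 * T1 * RA) ↔
    (a * b = r⁻¹ • (b * a) ∧ b * d = r⁻¹ • (d * b) ∧
     a * c = r⁻¹ • (c * a) ∧ c * d = r⁻¹ • (d * c) ∧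
     b * c = c * b ∧ a * d - d * a = (r⁻¹ - r) • (b * c) ∧
     a * f = f * a ∧ c * f = s • (f * c) ∧
     b * f = s⁻¹ • (f * b) ∧ d * f = f * d) := by
  constructor
  · intro h
    have H := fun p q => Matrix.ext_iff.2 h p q
    have e1 := H (1,1) (1,2)
    have e2 := H (2,1) (2,2)
    have e3 := H (2,1) (1,1)
    have e4 := H (2,2) (1,2)
    have e5 := H (2,1) (1,2)
    have e6 := H (2,1) (2,1)
    have e7 := H (0,1) (0,1)
    have e8 := H (2,0) (1,0)
    have e9 := H (0,1) (0,2)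
    have e10 := H (2,0) (2,0)
    simp only [Matrix.mul_apply, mulapp_fun, mulapp_fun', Fintype.sum_prod_type, Fin.sum_univ_three, Rmat, dEnt,
      Matrix.map_apply, Matrix.cons_val', Matrix.cons_val_zero, Matrix.cons_val_one,
      Matrix.head_cons, Matrix.empty_val', Matrix.cons_val_fin_one, Matrix.head_fin_const,
      Matrix.cons_val_two, Matrix.tail_cons, Prod.mk.injEq, Fin.isValue]
      at e1 e2 e3 e4 e5 e6 e7 e8 e9 e10
    norm_num [Fin.ext_iff, map_sub, mul_sub, sub_mul, algmul, mulalg, smul_mul_assoc,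
      mul_smul_comm, mul_assoc] at e1 e2 e3 e4 e5 e6 e7 e8 e9 e10
    refine ⟨?_, ?_, ?_, ?_, e5.symm, ?_,
      (smul_right_injective A (inv_ne_zero hs) e7).symm, e8, e9.symm, e10⟩
    · rw [← e1, inv_smul_smul₀ hr]
    · rw [e2, inv_smul_smul₀ hr]
    · rw [e3, inv_smul_smul₀ hr]
    · rw [← e4, inv_smul_smul₀ hr]
    · rw [e6]; match_scalars <;> ring
  · rintro ⟨hab, hbd, hac, hcd, hbc, had, haf, hcf, hbf, hdf⟩
    have had' : a * d = (r⁻¹ - r) • (b * c) + d * a := by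
      rw [← had]; abel
    intro T T1 T2 RA
    have hT12 : T1 * T2 = fun p q => T p.1 q.1 * T p.2 q.2 := by
      funext p q
      simp [Matrix.mul_apply, mulapp_fun, Fintype.sum_prod_type, T1, T2, ite_mul, mul_ite, zero_mul,
        mul_zero, Finset.sum_ite_eq, Finset.sum_ite_eq']
    have hT21 : T2 * T1 = fun p q => T p.2 q.2 * T p.1 q.1 := by
      funext p q
      simp [Matrix.mul_apply, mulapp_fun, Fintype.sum_prod_type, T1, T2, ite_mul, mul_ite, zero_mul,
        mul_zero, Finset.sum_ite_eq, Finset.sum_ite_eq']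
    have hL : ∀ (M : Matrix (Fin 3 × Fin 3) (Fin 3 × Fin 3) A) (p q : Fin 3 × Fin 3),
        (RA * M) p q = algebraMap ℂ A (dEnt r s p.1 p.2) * M p q +
          ((if p.1 = 0 ∧ p.2 ≠ 0 then algebraMap ℂ A (r - r⁻¹) * M (p.2, 0) q else 0) +
           (if p = (1, 2) then algebraMap ℂ A (r - r⁻¹) * M (2, 1) q else 0)) := by
      rintro M ⟨i, j⟩ q
      fin_cases i <;> fin_cases j <;>
        norm_num +decide [Matrix.mul_apply, Fintype.sum_prod_type, Fin.sum_univ_three, Rmat, dEnt, RA,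
          Matrix.map_apply, Prod.mk.injEq, Fin.isValue, Prod.ext_iff,
          fin3_mk0, fin3_mk1, fin3_mk2] <;>
        try abel
    have hR : ∀ (M : Matrix (Fin 3 × Fin 3) (Fin 3 × Fin 3) A) (p q : Fin 3 × Fin 3),
        (M * RA) p q = M p q * algebraMap ℂ A (dEnt r s q.1 q.2) +
          ((if q.2 = 0 ∧ q.1 ≠ 0 then M p (0, q.1) * algebraMap ℂ A (r - r⁻¹) else 0) +
           (if q = (2, 1) then M p (1, 2) * algebraMap ℂ A (r - r⁻¹) else 0)) := by
      rintro M p ⟨k, l⟩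
      fin_cases k <;> fin_cases l <;>
        norm_num +decide [Matrix.mul_apply, Fintype.sum_prod_type, Fin.sum_univ_three, Rmat, dEnt, RA,
          Matrix.map_apply, Prod.mk.injEq, Fin.isValue, Prod.ext_iff,
          fin3_mk0, fin3_mk1, fin3_mk2] <;>
        try abel
    rw [mul_assoc, hT12, hT21]
    ext ⟨i, j⟩ ⟨k, l⟩
    rw [hL (fun p q => T p.1 q.1 * T p.2 q.2), hR (fun p q => T p.2 q.2 * T p.1 q.1)]
    fin_cases i <;> fin_cases j <;> fin_cases k <;> fin_cases l <;>
      (simp only [dEnt, T, Matrix.cons_val', Matrix.cons_val_zero, Matrix.cons_val_one,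
        Matrix.head_cons, Matrix.empty_val', Matrix.cons_val_fin_one, Matrix.head_fin_const,
        Matrix.cons_val_two, Matrix.tail_cons, Prod.mk.injEq, Fin.isValue, fin3_mk0,
        fin3_mk1, fin3_mk2]
       try norm_num [Fin.ext_iff, fin3_mk0, fin3_mk1, fin3_mk2, map_sub, mul_sub, sub_mul,
        algmul, mulalg, smul_mul_assoc, mul_smul_comm, mul_assoc, hab, hbd, hac, hcd, hbc,
        had', haf, hcf, hbf, hdf, smul_smul, mul_inv_cancel₀ hr, inv_mul_cancel₀ hr,
        mul_inv_cancel₀ hs, inv_mul_cancel₀ hs]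
       try (match_scalars <;> ring))
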